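/- The family of star bodies with continuous radial function is a closed subset of the space of all star bodies in ℝ^d equipped with the radial Attouch–Wets distance d_{AW^r}; hence it is a complete metric space in this distance. -/

import Mathlib

open scoped ENNReal

noncomputable section

/-- Radial function of a set `A ⊆ ℝ^d` in direction `θ`. -/
def radialFn {d : ℕ} (A : Set (EuclideanSpace ℝ (Fin d)))
    (θ : EuclideanSpace ℝ (Fin d)) : ℝ≥0∞ :=
  sSup (ENNReal.ofReal '' {r : ℝ | 0 ≤ r ∧ r • θ ∈ A})

/-- A star set: nonempty and closed under scaling by `t ∈ [0,1]`. -/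
def IsStarSet {d : ℕ} (A : Set (EuclideanSpace ℝ (Fin d))) : Prop :=
  A.Nonempty ∧ ∀ a ∈ A, ∀ t : ℝ, 0 ≤ t → t ≤ 1 → t • a ∈ A

/-- A star body: a radially closed star set. -/
def IsStarBody {d : ℕ} (A : Set (EuclideanSpace ℝ (Fin d))) : Prop :=
  IsStarSet A ∧ ∀ θ : EuclideanSpace ℝ (Fin d), ‖θ‖ = 1 → radialFn A θ ≠ ⊤ →
    (radialFn A θ).toReal • θ ∈ A

open scoped Classical in
/-- The radial distance from a point `x` to a star body `A`:
`0` if `x ∈ A`, and `‖x‖ - ρ_A(x/‖x‖)` otherwise. -/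
def radialDist {d : ℕ} (x : EuclideanSpace ℝ (Fin d))
    (A : Set (EuclideanSpace ℝ (Fin d))) : ℝ :=
  if x ∈ A then 0 else ‖x‖ - (radialFn A (‖x‖⁻¹ • x)).toReal

/-- The radial Attouch–Wets distance between star bodies. -/
def dAWr {d : ℕ} (A₁ A₂ : Set (EuclideanSpace ℝ (Fin d))) : ℝ :=
  ⨆ j : ℕ, min (1 / ((j : ℝ) + 1))
    (⨆ x : Metric.closedBall (0 : EuclideanSpace ℝ (Fin d)) ((j : ℝ) + 1),
      |radialDist (x : EuclideanSpace ℝ (Fin d)) A₁ -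
        radialDist (x : EuclideanSpace ℝ (Fin d)) A₂|)


/-! For a star body `A`, `d_r(x, A) = (‖x‖ - ρ_A(x/‖x‖))⁺` with `ρ_A` valued in `[0, ∞]`, so
continuity of `ρ_A` on the sphere is equivalent to continuity of `d_r(·, A)`, and
`d_{AW^r}`-convergence is locally uniform convergence of the radial distance functions. Closedness
is then the continuity of locally uniform limits. For completeness, the radial distances of a
Cauchy sequence converge locally uniformly to some `f`; choosing `ρ(θ)` as a cluster point of
`ρ_{A_n}(θ)` in the compact space `[0, ∞]` exhibits `f` as `d_r(·, B)` for the star body `B`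
with radial function `ρ`. -/

open Filter Topology Metric
open scoped NNReal

local notation "ℝ^" n => EuclideanSpace ℝ (Fin n)

theorem ENNReal.continuous_of_forall_continuous_min {X : Type*} [TopologicalSpace X]
    {g : X → ℝ≥0∞} (hg : ∀ r : ℝ≥0, Continuous fun x => min (g x) r) : Continuous g := by
  refine continuous_iff_continuousAt.2 fun x₀ => ?_
  rcases eq_or_ne (g x₀) ⊤ with htop | htop
  · rw [ContinuousAt, htop, ENNReal.tendsto_nhds_top_iff_nnreal]
    intro r
    have hr : (r : ℝ≥0∞) < min (g x₀) ↑(r + 1) := by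
      simpa [htop] using ENNReal.lt_add_right ENNReal.coe_ne_top one_ne_zero
    filter_upwards [(hg (r + 1)).continuousAt.eventually (lt_mem_nhds hr)] with x hx
    exact hx.trans_le (min_le_left _ _)
  · set r : ℝ≥0 := (g x₀).toNNReal + 1
    have hr : min (g x₀) r < r := by
      rw [min_lt_iff, ← ENNReal.coe_toNNReal htop, ENNReal.coe_lt_coe]
      exact Or.inl (lt_add_one _)
    have hg_eq : (fun x => min (g x) r) =ᶠ[𝓝 x₀] g := by
      filter_upwards [(hg r).continuousAt.eventually (gt_mem_nhds hr)] with x hx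
      exact min_eq_left (min_lt_iff.1 hx |>.resolve_right (lt_irrefl _)).le
    exact (hg r).continuousAt.congr hg_eq

theorem inv_norm_smul_smul_of_norm_eq_one {E : Type*} [NormedAddCommGroup E] [NormedSpace ℝ E]
    {θ : E} (hθ : ‖θ‖ = 1) {r : ℝ} (hr : 0 < r) : ‖r • θ‖⁻¹ • r • θ = θ := by
  rw [norm_smul, hθ, mul_one, Real.norm_of_nonneg hr.le, inv_smul_smul₀ hr.ne']

theorem norm_inv_norm_smul_of_ne_zero {E : Type*} [NormedAddCommGroup E] [NormedSpace ℝ E]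
    {x : E} (hx : x ≠ 0) : ‖‖x‖⁻¹ • x‖ = 1 := by
  rw [norm_smul, norm_inv, norm_norm, inv_mul_cancel₀ (norm_ne_zero_iff.2 hx)]

theorem norm_smul_inv_norm_smul {E : Type*} [NormedAddCommGroup E] [NormedSpace ℝ E] (x : E) :
    ‖x‖ • ‖x‖⁻¹ • x = x := by
  rcases eq_or_ne x 0 with rfl | hx
  · simp
  · exact smul_inv_smul₀ (norm_ne_zero_iff.2 hx) x

section StarBody

variable {d : ℕ} {A : Set (ℝ^d)} {θ : ℝ^d} {r : ℝ}

theorem IsStarSet.zero_mem (h : IsStarSet A) : (0 : ℝ^d) ∈ A := by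
  obtain ⟨⟨a, ha⟩, hs⟩ := h
  simpa using hs a ha 0 le_rfl zero_le_one

theorem ofReal_le_radialFn (hr : 0 ≤ r) (h : r • θ ∈ A) : ENNReal.ofReal r ≤ radialFn A θ :=
  le_sSup ⟨r, ⟨hr, h⟩, rfl⟩

theorem IsStarBody.smul_mem_iff (hA : IsStarBody A) (hθ : ‖θ‖ = 1) (hr : 0 ≤ r) :
    r • θ ∈ A ↔ ENNReal.ofReal r ≤ radialFn A θ := by
  refine ⟨ofReal_le_radialFn hr, fun h => ?_⟩
  rcases h.lt_or_eq with hlt | heq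
  · obtain ⟨_, ⟨s, ⟨hs, hsA⟩, rfl⟩, hrs⟩ := lt_sSup_iff.1 hlt
    have hrs : r < s := (ENNReal.ofReal_lt_ofReal_iff'.1 hrs).1
    have hs0 : 0 < s := hr.trans_lt hrs
    simpa [smul_smul, div_mul_cancel₀ _ hs0.ne'] using
      hA.1.2 _ hsA (r / s) (div_nonneg hr hs) (div_le_one_of_le₀ hrs.le hs)
  · simpa [← heq, ENNReal.toReal_ofReal hr] using hA.2 θ hθ (heq ▸ ENNReal.ofReal_ne_top)

theorem IsStarBody.radialDist_eq (hA : IsStarBody A) (x : ℝ^d) :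
    radialDist x A = (ENNReal.ofReal ‖x‖ - radialFn A (‖x‖⁻¹ • x)).toReal := by
  by_cases hx : x ∈ A
  · rw [radialDist, if_pos hx, tsub_eq_zero_of_le, ENNReal.toReal_zero]
    exact ofReal_le_radialFn (norm_nonneg x) (by rwa [norm_smul_inv_norm_smul])
  · have hx0 : x ≠ 0 := fun h => hx (h ▸ hA.1.zero_mem)
    have hlt : radialFn A (‖x‖⁻¹ • x) < ENNReal.ofReal ‖x‖ := by
      rwa [← not_le, ← hA.smul_mem_iff (norm_inv_norm_smul_of_ne_zero hx0) (norm_nonneg x),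
        norm_smul_inv_norm_smul]
    rw [radialDist, if_neg hx, ENNReal.toReal_sub_of_le hlt.le ENNReal.ofReal_ne_top,
      ENNReal.toReal_ofReal (norm_nonneg x)]

theorem IsStarBody.ofReal_radialDist_smul (hA : IsStarBody A) (hθ : ‖θ‖ = 1) (hr : 0 ≤ r) :
    ENNReal.ofReal (radialDist (r • θ) A) = ENNReal.ofReal r - radialFn A θ := by
  rw [hA.radialDist_eq, ENNReal.ofReal_toReal (ENNReal.sub_ne_top ENNReal.ofReal_ne_top)]
  rcases hr.eq_or_lt with rfl | hr
  · simp
  · rw [inv_norm_smul_smul_of_norm_eq_one hθ hr, norm_smul, hθ, mul_one, Real.norm_of_nonneg hr.le]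

theorem IsStarBody.radialDist_nonneg (hA : IsStarBody A) (x : ℝ^d) : 0 ≤ radialDist x A :=
  hA.radialDist_eq x ▸ ENNReal.toReal_nonneg

theorem IsStarBody.radialDist_le_norm (hA : IsStarBody A) (x : ℝ^d) : radialDist x A ≤ ‖x‖ := by
  rw [hA.radialDist_eq]
  exact (ENNReal.toReal_mono ENNReal.ofReal_ne_top tsub_le_self).trans_eq
    (ENNReal.toReal_ofReal (norm_nonneg x))

end StarBody

section RadialSet

variable {d : ℕ} {c : (ℝ^d) → ℝ≥0∞} {θ : ℝ^d} {r : ℝ}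

def radialSet (c : (ℝ^d) → ℝ≥0∞) : Set (ℝ^d) :=
  {x | ENNReal.ofReal ‖x‖ ≤ c (‖x‖⁻¹ • x)}

theorem smul_mem_radialSet_iff (hθ : ‖θ‖ = 1) (hr : 0 ≤ r) :
    r • θ ∈ radialSet c ↔ ENNReal.ofReal r ≤ c θ := by
  rcases hr.eq_or_lt with rfl | hr
  · simp [radialSet]
  · rw [radialSet, Set.mem_ofPred_eq, inv_norm_smul_smul_of_norm_eq_one hθ hr, norm_smul, hθ,
      mul_one, Real.norm_of_nonneg hr.le]

theorem radialFn_radialSet (hθ : ‖θ‖ = 1) : radialFn (radialSet c) θ = c θ := by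
  refine le_antisymm (sSup_le ?_) (ENNReal.le_of_forall_nnreal_lt fun s hs => ?_)
  · rintro _ ⟨r, ⟨hr, hmem⟩, rfl⟩
    exact (smul_mem_radialSet_iff hθ hr).1 hmem
  · rw [← ENNReal.ofReal_coe_nnreal] at hs ⊢
    exact ofReal_le_radialFn s.2 ((smul_mem_radialSet_iff hθ s.2).2 hs.le)

theorem isStarBody_radialSet : IsStarBody (radialSet c) := by
  refine ⟨⟨⟨0, by simp [radialSet]⟩, fun a ha t ht0 ht1 => ?_⟩, fun θ hθ _ => ?_⟩
  · rcases eq_or_ne a 0 with rfl | ha0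
    · simpa using ha
    have hâ := norm_inv_norm_smul_of_ne_zero ha0
    rw [← norm_smul_inv_norm_smul a, smul_mem_radialSet_iff hâ (norm_nonneg a)] at ha
    rw [← norm_smul_inv_norm_smul a, smul_smul, smul_mem_radialSet_iff hâ (by positivity)]
    exact (ENNReal.ofReal_le_ofReal (mul_le_of_le_one_left (norm_nonneg a) ht1)).trans ha
  · rw [radialFn_radialSet hθ, smul_mem_radialSet_iff hθ ENNReal.toReal_nonneg]
    exact ENNReal.ofReal_toReal_le

theorem radialDist_radialSet (x : ℝ^d) :
    radialDist x (radialSet c) = (ENNReal.ofReal ‖x‖ - c (‖x‖⁻¹ • x)).toReal := by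
  rw [isStarBody_radialSet.radialDist_eq]
  rcases eq_or_ne x 0 with rfl | hx
  · simp
  · rw [radialFn_radialSet (norm_inv_norm_smul_of_ne_zero hx)]

end RadialSet

section Continuity

variable {d : ℕ} {A : Set (ℝ^d)}

theorem IsStarBody.continuous_radialDist (hA : IsStarBody A)
    (hρ : Continuous fun θ : sphere (0 : ℝ^d) 1 => radialFn A θ) :
    Continuous fun x => radialDist x A := by
  refine continuous_iff_continuousAt.2 fun x₀ => ?_
  rcases eq_or_ne x₀ 0 with rfl | hx₀
  · have h := squeeze_zero hA.radialDist_nonneg hA.radialDist_le_norm tendsto_norm_zero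
    have h0 : radialDist 0 A = 0 := by simpa using hA.radialDist_eq 0
    rwa [ContinuousAt, h0]
  · have hdir : ContinuousAt (fun x : ℝ^d => radialFn A (‖x‖⁻¹ • x)) x₀ := by
      have hnormalize : ContinuousOn (fun x : ℝ^d => ‖x‖⁻¹ • x) {0}ᶜ :=
        (continuous_norm.continuousOn.inv₀ fun x hx => norm_ne_zero_iff.2 hx).smul
          continuousOn_id
      have hρ' : ContinuousOn (radialFn A) (sphere 0 1) :=
        continuousOn_iff_continuous_domRestrict.2 hρ
      refine (hρ'.comp hnormalize fun x hx => ?_).continuousAt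
        (isOpen_compl_singleton.mem_nhds hx₀)
      exact mem_sphere_zero_iff_norm.2 (norm_inv_norm_smul_of_ne_zero hx)
    have hnorm : ContinuousAt (fun x : ℝ^d => ENNReal.ofReal ‖x‖) x₀ :=
      (ENNReal.continuous_ofReal.comp continuous_norm).continuousAt
    have h := (ENNReal.tendsto_toReal (ENNReal.sub_ne_top ENNReal.ofReal_ne_top)).comp
      (ENNReal.Tendsto.sub hnorm hdir (Or.inl ENNReal.ofReal_ne_top))
    simpa only [ContinuousAt, hA.radialDist_eq, Function.comp_def] using h

theorem IsStarBody.continuous_radialFn (hA : IsStarBody A)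
    (hd : Continuous fun x => radialDist x A) :
    Continuous fun θ : sphere (0 : ℝ^d) 1 => radialFn A θ := by
  refine ENNReal.continuous_of_forall_continuous_min fun r => ?_
  -- `min (ρ_A θ) r = r - (r - ρ_A θ) = r - d_r(r θ, A)`
  have h : Continuous fun θ : sphere (0 : ℝ^d) 1 =>
      (r : ℝ≥0∞) - ENNReal.ofReal (radialDist ((r : ℝ) • (θ : ℝ^d)) A) :=
    (ENNReal.continuous_sub_left ENNReal.coe_ne_top).comp
      (ENNReal.continuous_ofReal.comp
        (hd.comp ((continuous_const_smul (r : ℝ)).comp continuous_subtype_val)))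
  refine h.congr fun θ => ?_
  rw [hA.ofReal_radialDist_smul (mem_sphere_zero_iff_norm.1 θ.2) r.coe_nonneg,
    ENNReal.ofReal_coe_nnreal, tsub_eq_tsub_min _ (radialFn A θ),
    ENNReal.sub_sub_cancel ENNReal.coe_ne_top (min_le_left _ _), min_comm]

end Continuity

section AttouchWets

variable {d : ℕ} {A B : Set (ℝ^d)}

theorem dAWr_nonneg (A B : Set (ℝ^d)) : 0 ≤ dAWr A B :=
  Real.iSup_nonneg fun _ => le_min (by positivity) (Real.iSup_nonneg fun _ => abs_nonneg _)

theorem abs_radialDist_sub_le_dAWr (hA : IsStarBody A) (hB : IsStarBody B) {j : ℕ}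
    (hd : dAWr A B < 1 / ((j : ℝ) + 1)) {x : ℝ^d} (hx : ‖x‖ ≤ (j : ℝ) + 1) :
    |radialDist x A - radialDist x B| ≤ dAWr A B := by
  have hball : BddAbove (Set.range fun y : closedBall (0 : ℝ^d) ((j : ℝ) + 1) =>
      |radialDist (y : ℝ^d) A - radialDist (y : ℝ^d) B|) := by
    refine ⟨(j : ℝ) + 1, Set.forall_mem_range.2 fun y => ?_⟩
    have hy := mem_closedBall_zero_iff.1 y.2
    rw [abs_sub_le_iff]
    constructor <;> linarith [hA.radialDist_nonneg y, hB.radialDist_nonneg y,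
      hA.radialDist_le_norm y, hB.radialDist_le_norm y]
  have hmin : min (1 / ((j : ℝ) + 1)) (⨆ y : closedBall (0 : ℝ^d) ((j : ℝ) + 1),
      |radialDist (y : ℝ^d) A - radialDist (y : ℝ^d) B|) ≤ dAWr A B := by
    refine le_ciSup (f := fun i : ℕ => min (1 / ((i : ℝ) + 1))
      (⨆ y : closedBall (0 : ℝ^d) ((i : ℝ) + 1), |radialDist (y : ℝ^d) A - radialDist (y : ℝ^d) B|))
      ⟨1, ?_⟩ j
    rintro _ ⟨i, rfl⟩
    exact (min_le_left _ _).trans (div_le_one_of_le₀ (by linarith [i.cast_nonneg (α := ℝ)])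
      (by positivity))
  exact (le_ciSup hball ⟨x, mem_closedBall_zero_iff.2 hx⟩).trans
    ((min_le_iff.1 hmin).resolve_left hd.not_ge)

theorem dAWr_le {J : ℕ} {ε : ℝ} (hJ : 1 / ((J : ℝ) + 1) ≤ ε)
    (h : ∀ x : ℝ^d, ‖x‖ ≤ (J : ℝ) + 1 → |radialDist x A - radialDist x B| ≤ ε) :
    dAWr A B ≤ ε := by
  have hε : 0 ≤ ε := le_trans (by positivity) hJ
  refine Real.iSup_le (fun j => ?_) hε
  rcases le_or_gt j J with hj | hj
  · refine (min_le_right _ _).trans (Real.iSup_le (fun x => h x ?_) hε)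
    exact (mem_closedBall_zero_iff.1 x.2).trans (by gcongr)
  · exact (min_le_left _ _).trans (le_trans (by gcongr) hJ)

theorem eventually_dist_radialDist_lt {ι : Type*} {p : Filter ι} {A B : ι → Set (ℝ^d)}
    (hA : ∀ i, IsStarBody (A i)) (hB : ∀ i, IsStarBody (B i))
    (h : Tendsto (fun i => dAWr (A i) (B i)) p (𝓝 0)) {K : Set (ℝ^d)} (hK : IsCompact K)
    {ε : ℝ} (hε : 0 < ε) :
    ∀ᶠ i in p, ∀ x ∈ K, dist (radialDist x (A i)) (radialDist x (B i)) < ε := by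
  obtain ⟨R, hKR⟩ := hK.isBounded.subset_closedBall 0
  obtain ⟨j, hj⟩ := exists_nat_ge R
  have hδ : 0 < min ε (1 / ((j : ℝ) + 1)) := lt_min hε (by positivity)
  filter_upwards [h.eventually (gt_mem_nhds hδ)] with i hi x hx
  have hxj : ‖x‖ ≤ (j : ℝ) + 1 := by linarith [mem_closedBall_zero_iff.1 (hKR hx)]
  exact (abs_radialDist_sub_le_dAWr (hA i) (hB i) (hi.trans_le (min_le_right _ _)) hxj).trans_lt
    (hi.trans_le (min_le_left _ _))

theorem tendsto_dAWr_iff_tendstoLocallyUniformly {ι : Type*} {p : Filter ι}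
    {A : ι → Set (ℝ^d)} (hA : ∀ i, IsStarBody (A i)) (hB : IsStarBody B) :
    Tendsto (fun i => dAWr (A i) B) p (𝓝 0) ↔
      TendstoLocallyUniformly (fun i x => radialDist x (A i)) (fun x => radialDist x B) p := by
  rw [tendstoLocallyUniformly_iff_forall_isCompact]
  refine ⟨fun h K hK => Metric.tendstoUniformlyOn_iff.2 fun ε hε => ?_, fun h => ?_⟩
  · filter_upwards [eventually_dist_radialDist_lt hA (fun _ => hB) h hK hε] with i hi x hx
    rw [dist_comm]
    exact hi x hx
  · refine Metric.tendsto_nhds.2 fun ε hε => ?_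
    obtain ⟨J, hJ⟩ := exists_nat_one_div_lt (half_pos hε)
    filter_upwards [Metric.tendstoUniformlyOn_iff.1 (h _ (isCompact_closedBall 0 ((J : ℝ) + 1)))
      (ε / 2) (half_pos hε)] with i hi
    rw [Real.dist_eq, sub_zero, abs_of_nonneg (dAWr_nonneg _ _)]
    refine (dAWr_le hJ.le fun x hx => ?_).trans_lt (half_lt_self hε)
    rw [← Real.dist_eq, dist_comm]
    exact (hi x (mem_closedBall_zero_iff.2 hx)).le

end AttouchWets

section Completeness

variable {d : ℕ} {u : ℕ → Set (ℝ^d)}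

theorem exists_isStarBody_radialDist_eq_of_tendsto (hu : ∀ n, IsStarBody (u n)) {f : (ℝ^d) → ℝ}
    (hf : ∀ x, Tendsto (fun n => radialDist x (u n)) atTop (𝓝 (f x))) :
    ∃ B, IsStarBody B ∧ (fun x => radialDist x B) = f := by
  choose c φ hφ hc using fun y : ℝ^d => CompactSpace.tendsto_subseq fun n => radialFn (u n) y
  refine ⟨radialSet c, isStarBody_radialSet, funext fun x => ?_⟩
  rw [radialDist_radialSet]
  set y := ‖x‖⁻¹ • x
  have hlim := (ENNReal.tendsto_toReal (ENNReal.sub_ne_top ENNReal.ofReal_ne_top)).comp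
    ((ENNReal.continuous_sub_left (ENNReal.ofReal_ne_top (r := ‖x‖))).tendsto _ |>.comp (hc y))
  refine tendsto_nhds_unique (hlim.congr fun n => ?_) ((hf x).comp (hφ y).tendsto_atTop)
  exact ((hu _).radialDist_eq x).symm

theorem exists_tendsto_dAWr_of_cauchy (hu : ∀ n, IsStarBody (u n))
    (hC : ∀ ε : ℝ, 0 < ε → ∃ N : ℕ, ∀ m ≥ N, ∀ n ≥ N, dAWr (u m) (u n) < ε) :
    ∃ B, IsStarBody B ∧ Tendsto (fun n => dAWr (u n) B) atTop (𝓝 0) := by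
  have hC' : Tendsto (fun p : ℕ × ℕ => dAWr (u p.1) (u p.2)) (atTop ×ˢ atTop) (𝓝 0) := by
    rw [prod_atTop_atTop_eq]
    refine Metric.tendsto_nhds.2 fun ε hε => eventually_atTop_prod_self'.2 ?_
    obtain ⟨N, hN⟩ := hC ε hε
    refine ⟨N, fun m hm n hn => ?_⟩
    rw [Real.dist_eq, sub_zero, abs_of_nonneg (dAWr_nonneg _ _)]
    exact hN m hm n hn
  have hcauchy : ∀ K, IsCompact K →
      UniformCauchySeqOn (fun n x => radialDist x (u n)) atTop K := fun K hK U hU => by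
    obtain ⟨ε, hε, hεU⟩ := Metric.mem_uniformity_dist.1 hU
    filter_upwards [eventually_dist_radialDist_lt (fun p : ℕ × ℕ => hu p.1) (fun p => hu p.2)
      hC' hK hε] with p hp x hx using hεU (hp x hx)
  choose f hf using fun x => cauchySeq_tendsto_of_complete
    ((hcauchy {x} isCompact_singleton).cauchySeq (Set.mem_singleton x))
  obtain ⟨B, hB, hBf⟩ := exists_isStarBody_radialDist_eq_of_tendsto hu hf
  refine ⟨B, hB, (tendsto_dAWr_iff_tendstoLocallyUniformly hu hB).2 ?_⟩
  rw [hBf, tendstoLocallyUniformly_iff_forall_isCompact]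
  exact fun K hK => (hcauchy K hK).tendstoUniformlyOn_of_tendsto fun x _ => hf x

end Completeness

theorem continuous_radialFn_of_tendsto_dAWr {d : ℕ} {A : ℕ → Set (ℝ^d)} {B : Set (ℝ^d)}
    (hA : ∀ n, IsStarBody (A n))
    (hρ : ∀ n, Continuous fun θ : sphere (0 : ℝ^d) 1 => radialFn (A n) θ) (hB : IsStarBody B)
    (h : Tendsto (fun n => dAWr (A n) B) atTop (𝓝 0)) :
    Continuous fun θ : sphere (0 : ℝ^d) 1 => radialFn B θ :=
  hB.continuous_radialFn <| ((tendsto_dAWr_iff_tendstoLocallyUniformly hA hB).1 h).continuous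
    (Frequently.of_forall fun n => (hA n).continuous_radialDist (hρ n))

theorem S1_closed_and_complete_in_dAWr {d : ℕ} :
    (∀ (A : ℕ → Set (EuclideanSpace ℝ (Fin d))) (B : Set (EuclideanSpace ℝ (Fin d))),
      (∀ n, IsStarBody (A n)) →
      (∀ n, Continuous fun θ : Metric.sphere (0 : EuclideanSpace ℝ (Fin d)) 1 =>
        radialFn (A n) (θ : EuclideanSpace ℝ (Fin d))) →
      IsStarBody B →
      Filter.Tendsto (fun n => dAWr (A n) B) Filter.atTop (nhds 0) →
      Continuous fun θ : Metric.sphere (0 : EuclideanSpace ℝ (Fin d)) 1 =>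
        radialFn B (θ : EuclideanSpace ℝ (Fin d))) ∧
    (∀ u : ℕ → Set (EuclideanSpace ℝ (Fin d)),
      (∀ n, IsStarBody (u n) ∧
        Continuous fun θ : Metric.sphere (0 : EuclideanSpace ℝ (Fin d)) 1 =>
          radialFn (u n) (θ : EuclideanSpace ℝ (Fin d))) →
      (∀ ε : ℝ, 0 < ε → ∃ N : ℕ, ∀ m ≥ N, ∀ n ≥ N, dAWr (u m) (u n) < ε) →
      ∃ B : Set (EuclideanSpace ℝ (Fin d)), IsStarBody B ∧
        (Continuous fun θ : Metric.sphere (0 : EuclideanSpace ℝ (Fin d)) 1 =>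
          radialFn B (θ : EuclideanSpace ℝ (Fin d))) ∧
        Filter.Tendsto (fun n => dAWr (u n) B) Filter.atTop (nhds 0)) := by
  refine ⟨fun A B hA hρ hB h => continuous_radialFn_of_tendsto_dAWr hA hρ hB h, fun u hu hC => ?_⟩
  obtain ⟨B, hB, h⟩ := exists_tendsto_dAWr_of_cauchy (fun n => (hu n).1) hC
  exact ⟨B, hB, continuous_radialFn_of_tendsto_dAWr (fun n => (hu n).1) (fun n => (hu n).2) hB h, h⟩
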